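/- arXiv:1105.2980 — 2 statements merged into one kernel-verified Lean document; each statement's English description precedes it below -/
import Mathlib

section
/- Let μ be a finite measure on X and let A ⊆ X. Suppose X \ N (for some μ-null set N) can be covered by countably many pairwise disjoint measurable sets {E_α}, and on each E_α there is a measurable subset F_α ⊆ E_α with F_α ∩ A = ∅ and μ(F_α) ≥ κ·μ(E_α) for a fixed κ ∈ (0,1). Then the outer measure of A is at most (1-κ)·μ(X). -/
open MeasureTheory

theorem stmt7 {X : Type*} [MeasurableSpace X] (μ : Measure X) [IsFiniteMeasure μ]
    (A : Set X) (κ : ℝ) (hκ0 : 0 < κ) (hκ1 : κ < 1)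
    (N : Set X) (hN : μ N = 0)
    (E : ℕ → Set X) (hEmeas : ∀ i, MeasurableSet (E i))
    (hdisj : Pairwise (Function.onFun Disjoint E))
    (hcover : Set.univ \ N ⊆ ⋃ i, E i)
    (F : ℕ → Set X) (hFmeas : ∀ i, MeasurableSet (F i))
    (hFE : ∀ i, F i ⊆ E i) (hFA : ∀ i, F i ∩ A = ∅)
    (hFprop : ∀ i, ENNReal.ofReal κ * μ (E i) ≤ μ (F i)) :
    μ A ≤ ENNReal.ofReal (1 - κ) * μ Set.univ := by
  have hsub : A ⊆ N ∪ ⋃ i, (E i \ F i) := by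
    intro x hx
    by_cases hxN : x ∈ N
    · exact Or.inl hxN
    · obtain ⟨i, hi⟩ := Set.mem_iUnion.mp (hcover ⟨trivial, hxN⟩)
      refine Or.inr (Set.mem_iUnion.mpr ⟨i, hi, fun hxF => ?_⟩)
      have : x ∈ F i ∩ A := ⟨hxF, hx⟩
      simp [hFA i] at this
  have hstep : ∀ i, μ (E i \ F i) ≤ ENNReal.ofReal (1 - κ) * μ (E i) := by
    intro i
    have hEfin : μ (E i) ≠ ⊤ := measure_ne_top μ _
    have hsum : μ (E i \ F i) + μ (F i) = μ (E i) := by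
      rw [measure_diff (hFE i) (hFmeas i).nullMeasurableSet (measure_ne_top μ _)]
      exact tsub_add_cancel_of_le (measure_mono (hFE i))
    have hκsplit : ENNReal.ofReal (1 - κ) + ENNReal.ofReal κ = 1 := by
      rw [← ENNReal.ofReal_add (by linarith) hκ0.le]
      norm_num
    have key : μ (E i \ F i) + ENNReal.ofReal κ * μ (E i)
        ≤ ENNReal.ofReal (1 - κ) * μ (E i) + ENNReal.ofReal κ * μ (E i) := by
      rw [← add_mul, hκsplit, one_mul]
      calc μ (E i \ F i) + ENNReal.ofReal κ * μ (E i)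
          ≤ μ (E i \ F i) + μ (F i) := by gcongr; exact hFprop i
        _ = μ (E i) := hsum
    exact ENNReal.le_of_add_le_add_right
      (ENNReal.mul_ne_top ENNReal.ofReal_ne_top hEfin) key
  calc μ A ≤ μ (N ∪ ⋃ i, (E i \ F i)) := measure_mono hsub
    _ ≤ μ N + μ (⋃ i, (E i \ F i)) := measure_union_le _ _
    _ = μ (⋃ i, (E i \ F i)) := by rw [hN, zero_add]
    _ ≤ ∑' i, μ (E i \ F i) := measure_iUnion_le _
    _ ≤ ∑' i, ENNReal.ofReal (1 - κ) * μ (E i) := ENNReal.tsum_le_tsum hstep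
    _ = ENNReal.ofReal (1 - κ) * ∑' i, μ (E i) := ENNReal.tsum_mul_left
    _ = ENNReal.ofReal (1 - κ) * μ (⋃ i, E i) := by
        rw [measure_iUnion hdisj hEmeas]
    _ ≤ ENNReal.ofReal (1 - κ) * μ Set.univ := by
        gcongr; exact Set.subset_univ _
end

section
/- Let μ be a finite measure on X, κ ∈ (0,1), and A ⊆ X. Suppose that for every measurable set B ⊇ A there exists a μ-null set N and a countable disjoint family of measurable sets {E_α} covering B \ N with each E_α ⊆ B, together with measurable F_α ⊆ E_α satisfying F_α ∩ A = ∅ and μ(F_α) ≥ κ·μ(E_α). Then μ*(A) = 0. -/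
open MeasureTheory

theorem stmt8 {X : Type*} [MeasurableSpace X] (μ : Measure X) [IsFiniteMeasure μ]
    (A : Set X) (κ : ℝ) (hκ0 : 0 < κ) (hκ1 : κ < 1)
    (h : ∀ B : Set X, MeasurableSet B → A ⊆ B →
      ∃ (N : Set X) (E F : ℕ → Set X),
        μ N = 0 ∧
        (∀ i, MeasurableSet (E i)) ∧
        Pairwise (Function.onFun Disjoint E) ∧
        B \ N ⊆ ⋃ i, E i ∧
        (∀ i, E i ⊆ B) ∧
        (∀ i, MeasurableSet (F i)) ∧
        (∀ i, F i ⊆ E i) ∧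
        (∀ i, F i ∩ A = ∅) ∧
        (∀ i, ENNReal.ofReal κ * μ (E i) ≤ μ (F i))) :
    μ A = 0 := by
  set B := toMeasurable μ A with hBdef
  obtain ⟨N, E, F, hN, hEm, hEd, hBNE, hEB, hFm, hFE, hFA, hκEF⟩ :=
    h B (measurableSet_toMeasurable μ A) (subset_toMeasurable μ A)
  have hBA : μ B = μ A := measure_toMeasurable A
  -- μ (⋃ E) = μ B
  have hUEB : (⋃ i, E i) ⊆ B := Set.iUnion_subset hEB
  have hEeq : μ (⋃ i, E i) = μ B := by
    refine le_antisymm (measure_mono hUEB) ?_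
    calc μ B = μ (B \ N) := (measure_diff_null hN).symm
    _ ≤ μ (⋃ i, E i) := measure_mono hBNE
  -- F disjoint
  have hFd : Pairwise (Function.onFun Disjoint F) := fun i j hij =>
    (hEd hij).mono (hFE i) (hFE j)
  have hFsum : μ (⋃ i, F i) = ∑' i, μ (F i) := measure_iUnion hFd hFm
  have hEsum : μ (⋃ i, E i) = ∑' i, μ (E i) := measure_iUnion hEd hEm
  -- κ μ B ≤ μ (⋃ F)
  have hκB : ENNReal.ofReal κ * μ B ≤ μ (⋃ i, F i) := by
    rw [hFsum, ← hEeq, hEsum, ← ENNReal.tsum_mul_left]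
    exact ENNReal.tsum_le_tsum hκEF
  -- A ⊆ B \ ⋃ F
  have hAsub : A ⊆ B \ ⋃ i, F i := by
    intro x hx
    refine ⟨subset_toMeasurable μ A hx, ?_⟩
    intro hxF
    obtain ⟨i, hi⟩ := Set.mem_iUnion.mp hxF
    exact Set.eq_empty_iff_forall_notMem.mp (hFA i) x ⟨hi, hx⟩
  have hUF : (⋃ i, F i) ⊆ B := fun x hx => by
    obtain ⟨i, hi⟩ := Set.mem_iUnion.mp hx
    exact hEB i (hFE i hi)
  have hfin : μ (⋃ i, F i) ≠ ⊤ := measure_ne_top μ _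
  have hdiff : μ (B \ ⋃ i, F i) = μ B - μ (⋃ i, F i) :=
    measure_diff hUF (MeasurableSet.iUnion hFm).nullMeasurableSet hfin
  have hle : μ A ≤ μ B - ENNReal.ofReal κ * μ B := by
    calc μ A ≤ μ (B \ ⋃ i, F i) := measure_mono hAsub
    _ = μ B - μ (⋃ i, F i) := hdiff
    _ ≤ μ B - ENNReal.ofReal κ * μ B := tsub_le_tsub_left hκB _
  rw [hBA] at hle
  have hκA : ENNReal.ofReal κ * μ A ≤ μ A := by
    calc ENNReal.ofReal κ * μ A ≤ 1 * μ A := by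
          gcongr
          exact le_of_lt (by simpa using ENNReal.ofReal_lt_one.mpr hκ1)
    _ = μ A := one_mul _
  by_contra hA
  have hc0 : ENNReal.ofReal κ * μ A ≠ 0 :=
    mul_ne_zero (by simpa [ENNReal.ofReal_eq_zero] using hκ0.not_ge) hA
  exact absurd hle (not_le.mpr (ENNReal.sub_lt_self (measure_ne_top μ A) hA hc0))
end
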